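/- In the coordinate-wise dual averaging setup (convex $f$, $x_k = x_0 - A_k^{-1}s_k$ with $A_k$ positive definite diagonal and non-decreasing in the semidefinite order, $s_{k+1}=s_k+\lambda_k g_k$ with $g_k\in\partial f(x_k)$, $\lambda_k>0$), if $s_{n+1}\neq 0$ then $D_\infty = \|x_0-x_*\|_\infty \geq \frac{\|s_{n+1}\|_{A_{n+1}^{-1}}^2 - \sum_{k=0}^{n}\lambda_k^2\|g_k\|_{A_k^{-1}}^2}{2\|s_{n+1}\|_1}$. -/

import Mathlib

/-!
Write `‖v‖²ₖ = v ⬝ᵥ Aₖ⁻¹ v`. Expanding `s_{k+1} = s_k + λ_k g_k` and using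
`A_k⁻¹ s_k = x₀ - x_k` gives
`‖s_{k+1}‖²ₖ = ‖s_k‖²ₖ + 2 λ_k g_k ⬝ᵥ (x₀ - x_k) + λ_k² ‖g_k‖²ₖ`,
and `g_k ⬝ᵥ (x_k - x_*) ≥ f(x_k) - f(x_*) ≥ 0` bounds the middle term by `2 λ_k g_k ⬝ᵥ (x₀ - x_*)`.
Since `A_{k+1} ≥ A_k`, `‖s_{k+1}‖²_{k+1} ≤ ‖s_{k+1}‖²ₖ`; telescoping gives
`‖s_{n+1}‖²_{n+1} ≤ ∑ λ_k² ‖g_k‖²ₖ + 2 s_{n+1} ⬝ᵥ (x₀ - x_*)`, and Hölder's inequality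
`s ⬝ᵥ d ≤ ‖s‖₁ ‖d‖_∞` finishes.
-/

open Finset Matrix

section DiagonalQuadraticForm

variable {ι : Type*} [Fintype ι] [DecidableEq ι]

theorem Matrix.inv_diagonal_of_ne_zero {K : Type*} [Field K] {d : ι → K} (hd : ∀ i, d i ≠ 0) :
    (diagonal d)⁻¹ = diagonal d⁻¹ :=
  inv_eq_right_inv <| by
    rw [diagonal_mul_diagonal, ← diagonal_one]
    exact congrArg diagonal (funext fun i => mul_inv_cancel₀ (hd i))

theorem Matrix.dotProduct_inv_diagonal_mulVec {K : Type*} [Field K] {d : ι → K}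
    (hd : ∀ i, d i ≠ 0) (v w : ι → K) :
    v ⬝ᵥ ((diagonal d)⁻¹ *ᵥ w) = ∑ i, v i * w i / d i := by
  simp only [inv_diagonal_of_ne_zero hd, dotProduct, mulVec_diagonal, Pi.inv_apply]
  exact sum_congr rfl fun i _ => by ring

theorem Matrix.dotProduct_inv_diagonal_mulVec_add_smul {K : Type*} [Field K] {d : ι → K}
    (hd : ∀ i, d i ≠ 0) (v w : ι → K) (c : K) :
    (v + c • w) ⬝ᵥ ((diagonal d)⁻¹ *ᵥ (v + c • w)) =
      v ⬝ᵥ ((diagonal d)⁻¹ *ᵥ v) + 2 * c * (w ⬝ᵥ ((diagonal d)⁻¹ *ᵥ v))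
        + c ^ 2 * (w ⬝ᵥ ((diagonal d)⁻¹ *ᵥ w)) := by
  simp only [dotProduct_inv_diagonal_mulVec hd, Pi.add_apply, Pi.smul_apply, smul_eq_mul,
    mul_sum, ← sum_add_distrib]
  exact sum_congr rfl fun i _ => by field_simp [hd i]; ring

theorem Matrix.dotProduct_inv_diagonal_mulVec_self_le_of_le {d e : ι → ℝ} (hd : ∀ i, 0 < d i)
    (hde : ∀ i, d i ≤ e i) (v : ι → ℝ) :
    v ⬝ᵥ ((diagonal e)⁻¹ *ᵥ v) ≤ v ⬝ᵥ ((diagonal d)⁻¹ *ᵥ v) := by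
  have he : ∀ i, 0 < e i := fun i => (hd i).trans_le (hde i)
  rw [dotProduct_inv_diagonal_mulVec (fun i => (he i).ne'),
    dotProduct_inv_diagonal_mulVec (fun i => (hd i).ne')]
  gcongr with i
  · exact mul_self_nonneg _
  · exact hd i
  · exact hde i

end DiagonalQuadraticForm

theorem Matrix.dotProduct_le_sum_abs_mul_norm {ι : Type*} [Fintype ι] (v w : ι → ℝ) :
    v ⬝ᵥ w ≤ (∑ i, |v i|) * ‖w‖ := by
  rw [dotProduct, sum_mul]
  refine sum_le_sum fun i _ => ?_
  calc v i * w i ≤ |v i| * |w i| := (le_abs_self _).trans (abs_mul _ _).le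
    _ ≤ |v i| * ‖w‖ := by gcongr; exact norm_le_pi_norm w i

theorem dualAveraging_sq_norm_le {ι : Type*} [Fintype ι] [DecidableEq ι]
    (xstar x0 : ι → ℝ) (g s x : ℕ → ι → ℝ) (lam : ℕ → ℝ) (hlam : ∀ k, 0 ≤ lam k)
    (a : ℕ → ι → ℝ) (ha : ∀ k i, 0 < a k i) (hamono : ∀ k i, a k i ≤ a (k + 1) i)
    (hs0 : s 0 = 0) (hs : ∀ k, s (k + 1) = s k + lam k • g k)
    (hx : ∀ k, x k = x0 - (diagonal (a k))⁻¹ *ᵥ s k)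
    (hg : ∀ k, 0 ≤ g k ⬝ᵥ (x k - xstar)) (m : ℕ) :
    s m ⬝ᵥ ((diagonal (a m))⁻¹ *ᵥ s m) ≤
      ∑ k ∈ range m, lam k ^ 2 * (g k ⬝ᵥ ((diagonal (a k))⁻¹ *ᵥ g k))
        + 2 * (s m ⬝ᵥ (x0 - xstar)) := by
  induction m with
  | zero => simp [hs0]
  | succ k ih =>
    have hcross : g k ⬝ᵥ ((diagonal (a k))⁻¹ *ᵥ s k) ≤ g k ⬝ᵥ (x0 - xstar) := by
      have hsplit : (diagonal (a k))⁻¹ *ᵥ s k = (x0 - xstar) - (x k - xstar) := by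
        rw [hx k]; abel
      rw [hsplit, dotProduct_sub]
      linarith [hg k]
    have hexpand := dotProduct_inv_diagonal_mulVec_add_smul (fun i => (ha k i).ne') (s k) (g k)
      (lam k)
    have hanti := dotProduct_inv_diagonal_mulVec_self_le_of_le (ha k) (hamono k) (s (k + 1))
    have hlin : s (k + 1) ⬝ᵥ (x0 - xstar) = s k ⬝ᵥ (x0 - xstar) + lam k * (g k ⬝ᵥ (x0 - xstar)) := by
      rw [hs k, add_dotProduct, smul_dotProduct, smul_eq_mul]
    rw [← hs k] at hexpand
    rw [sum_range_succ]
    nlinarith [mul_le_mul_of_nonneg_left hcross (hlam k)]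

theorem stmt11_general (p n : ℕ) (f : (Fin p → ℝ) → ℝ)
    (xstar x0 : Fin p → ℝ)
    (hmin : ∀ y, f xstar ≤ f y)
    (g s x : ℕ → Fin p → ℝ) (lam : ℕ → ℝ)
    (hlam : ∀ k, 0 < lam k)
    (a : ℕ → Fin p → ℝ)
    (ha : ∀ k i, 0 < a k i)
    (hamono : ∀ k i, a k i ≤ a (k + 1) i)
    (A : ℕ → Matrix (Fin p) (Fin p) ℝ)
    (hAdiag : ∀ k, A k = Matrix.diagonal (a k))
    (hs0 : s 0 = 0) (hs : ∀ k, s (k + 1) = s k + lam k • g k)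
    (hx : ∀ k, x k = x0 - (A k)⁻¹ *ᵥ s k)
    (hsubgrad : ∀ k, ∀ y, f (x k) + g k ⬝ᵥ (y - x k) ≤ f y) :
    ((s (n + 1) ⬝ᵥ ((A (n + 1))⁻¹ *ᵥ s (n + 1)))
        - ∑ k ∈ range (n + 1), (lam k) ^ 2 * (g k ⬝ᵥ ((A k)⁻¹ *ᵥ g k)))
      / (2 * ∑ i, |s (n + 1) i|)
      ≤ ‖x0 - xstar‖ := by
  obtain rfl : A = fun k => diagonal (a k) := funext hAdiag
  have hg : ∀ k, 0 ≤ g k ⬝ᵥ (x k - xstar) := fun k => by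
    have hmono : g k ⬝ᵥ (xstar - x k) ≤ 0 := by linarith [hsubgrad k xstar, hmin (x k)]
    rw [← neg_sub, dotProduct_neg]
    linarith
  have hbound := dualAveraging_sq_norm_le xstar x0 g s x lam (fun k => (hlam k).le) a ha hamono
    hs0 hs hx hg (n + 1)
  have hholder := dotProduct_le_sum_abs_mul_norm (s (n + 1)) (x0 - xstar)
  refine div_le_of_le_mul₀ (by positivity) (norm_nonneg _) ?_
  linarith

theorem stmt11 (p n : ℕ) (f : (Fin p → ℝ) → ℝ)
    (hconv : ConvexOn ℝ Set.univ f)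
    (xstar x0 : Fin p → ℝ)
    (hmin : ∀ y, f xstar ≤ f y)
    (g s x : ℕ → Fin p → ℝ) (lam : ℕ → ℝ)
    (hlam : ∀ k, 0 < lam k)
    (a : ℕ → Fin p → ℝ)
    (ha : ∀ k i, 0 < a k i)
    (hamono : ∀ k i, a k i ≤ a (k + 1) i)
    (A : ℕ → Matrix (Fin p) (Fin p) ℝ)
    (hAdiag : ∀ k, A k = Matrix.diagonal (a k))
    (hs0 : s 0 = 0) (hs : ∀ k, s (k + 1) = s k + lam k • g k)
    (hx : ∀ k, x k = x0 - (A k)⁻¹ *ᵥ s k)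
    (hsubgrad : ∀ k, ∀ y, f (x k) + g k ⬝ᵥ (y - x k) ≤ f y)
    (hsne : s (n + 1) ≠ 0) :
    ((s (n + 1) ⬝ᵥ ((A (n + 1))⁻¹ *ᵥ s (n + 1)))
        - ∑ k ∈ range (n + 1), (lam k) ^ 2 * (g k ⬝ᵥ ((A k)⁻¹ *ᵥ g k)))
      / (2 * ∑ i, |s (n + 1) i|)
      ≤ ‖x0 - xstar‖ :=
  stmt11_general p n f xstar x0 hmin g s x lam hlam a ha hamono A hAdiag hs0 hs hx hsubgrad
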